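/- Let ρ be a density matrix on ℂ^d and let Φ be a quantum channel on ℂ^d with Kraus operators {K_i}. Then I_ρ(Φ) ≤ V_ρ(Φ); equivalently, the classical uncertainty C_ρ(Φ) = V_ρ(Φ) − I_ρ(Φ) is nonnegative. -/

import Mathlib

open Matrix
open scoped ComplexOrder

noncomputable section

/-- The square root of a positive semidefinite matrix, as `Matrix.PosSemidef.sqrt` was defined
in the older Mathlib. -/
def Matrix.PosSemidef.sqrt {n 𝕜 : Type*} [Fintype n] [DecidableEq n] [RCLike 𝕜]
    {A : Matrix n n 𝕜} (hA : A.PosSemidef) : Matrix n n 𝕜 :=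
  hA.1.eigenvectorUnitary.1 * diagonal ((↑) ∘ Real.sqrt ∘ hA.1.eigenvalues) *
  (star hA.1.eigenvectorUnitary : Matrix n n 𝕜)

/-- Variance of an operator `K` with respect to a state `ρ`:
`V_ρ(K) = ½ tr((K†K + KK†)ρ) − |tr(Kρ)|²`. -/
def opVar {d : ℕ} (ρ K : Matrix (Fin d) (Fin d) ℂ) : ℝ :=
  (((Kᴴ * K + K * Kᴴ) * ρ).trace).re / 2 - ‖(K * ρ).trace‖ ^ 2

/-- Variance of a channel with Kraus operators `K i`: `V_ρ(Φ) = Σ_i V_ρ(K_i)`. -/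
def chanVar {d n : ℕ} (ρ : Matrix (Fin d) (Fin d) ℂ)
    (K : Fin n → Matrix (Fin d) (Fin d) ℂ) : ℝ :=
  ∑ i, opVar ρ (K i)

/-- Wigner–Yanase skew information of a channel with Kraus operators `K i`:
`I_ρ(Φ) = ½ Σ_i ‖[√ρ, K_i]‖_F²`, where `√ρ` is the PSD square root of `ρ`. -/
def chanSkew {d n : ℕ} (ρ : Matrix (Fin d) (Fin d) ℂ) (hρ : ρ.PosSemidef)
    (K : Fin n → Matrix (Fin d) (Fin d) ℂ) : ℝ :=
  (1 / 2) * ∑ i,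
    (((hρ.sqrt * K i - K i * hρ.sqrt)ᴴ * (hρ.sqrt * K i - K i * hρ.sqrt)).trace).re

/-- Quantum uncertainty of a channel:
`Q_ρ(Φ) = √(V_ρ(Φ)² − (V_ρ(Φ) − I_ρ(Φ))²)`. -/
def chanQ {d n : ℕ} (ρ : Matrix (Fin d) (Fin d) ℂ) (hρ : ρ.PosSemidef)
    (K : Fin n → Matrix (Fin d) (Fin d) ℂ) : ℝ :=
  Real.sqrt ((chanVar ρ K) ^ 2 - (chanVar ρ K - chanSkew ρ hρ K) ^ 2)

/-! Expanding the commutator gives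
`½ ‖[√ρ, K]‖²_F = ½ tr((K†K + KK†)ρ) − tr(√ρ K† √ρ K)`, so for each Kraus operator it suffices
that `|tr(Kρ)|² ≤ tr(√ρ K† √ρ K)`. With `q = √√ρ` this is the Cauchy–Schwarz inequality for the
Hilbert–Schmidt inner product, applied to `√ρ` and `q K q`, together with `tr ρ = 1`. -/

namespace Matrix

theorem trace_conjTranspose_commutator_mul_self {n R : Type*} [Fintype n] [CommRing R]
    [StarRing R] {s : Matrix n n R} (hs : sᴴ = s) (K : Matrix n n R) :
    ((s * K - K * s)ᴴ * (s * K - K * s)).trace =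
      ((Kᴴ * K + K * Kᴴ) * (s * s)).trace - 2 * (s * Kᴴ * s * K).trace := by
  have expand : (s * K - K * s)ᴴ * (s * K - K * s) =
      Kᴴ * s * s * K + s * (Kᴴ * K * s) - Kᴴ * s * K * s - s * Kᴴ * s * K := by
    rw [conjTranspose_sub, conjTranspose_mul, conjTranspose_mul, hs]
    noncomm_ring
  rw [expand, trace_sub, trace_sub, trace_add, trace_mul_comm (Kᴴ * s * s),
    trace_mul_comm s (Kᴴ * K * s), trace_mul_comm (Kᴴ * s * K), Matrix.add_mul, trace_add]
  simp only [Matrix.mul_assoc]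
  ring

section RCLike

variable {n 𝕜 : Type*} [Fintype n] [DecidableEq n] [RCLike 𝕜]

theorem PosSemidef.posSemidef_sqrt {A : Matrix n n 𝕜} (hA : A.PosSemidef) :
    hA.sqrt.PosSemidef := by
  rw [PosSemidef.sqrt, star_eq_conjTranspose]
  exact (PosSemidef.diagonal fun i => RCLike.ofReal_nonneg.mpr (Real.sqrt_nonneg _)
    ).mul_mul_conjTranspose_same _

theorem PosSemidef.sqrt_mul_self {A : Matrix n n 𝕜} (hA : A.PosSemidef) :
    hA.sqrt * hA.sqrt = A := by
  conv_rhs => rw [hA.1.spectral_theorem, Unitary.conjStarAlgAut_apply]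
  have hU := Unitary.coe_star_mul_self hA.1.eigenvectorUnitary
  simp only [PosSemidef.sqrt, Matrix.mul_assoc]
  rw [← Matrix.mul_assoc (star _ : Matrix n n 𝕜) _ _, hU, Matrix.one_mul,
    ← Matrix.mul_assoc (diagonal _) (diagonal _), diagonal_mul_diagonal]
  congr 4 with i
  simp only [Function.comp_apply, ← RCLike.ofReal_mul,
    Real.mul_self_sqrt (hA.eigenvalues_nonneg i)]

theorem norm_trace_mul_conjTranspose_sq_le (A B : Matrix n n 𝕜) :
    ‖(A * Bᴴ).trace‖ ^ 2 ≤ RCLike.re (A * Aᴴ).trace * RCLike.re (B * Bᴴ).trace := by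
  let := (1 : Matrix n n 𝕜).toMatrixSeminormedAddCommGroup PosSemidef.one
  let := (1 : Matrix n n 𝕜).toMatrixInnerProductSpace PosSemidef.one
  have inner_eq (x y : Matrix n n 𝕜) : inner 𝕜 x y = (y * xᴴ).trace := by
    change (y * 1 * xᴴ).trace = _
    rw [Matrix.mul_one]
  have h := inner_mul_inner_self_le (𝕜 := 𝕜) A B
  rw [← inner_conj_symm A B, RCLike.norm_conj, ← sq] at h
  simpa only [inner_eq] using h

theorem PosSemidef.norm_trace_mul_sq_le {s : Matrix n n 𝕜} (hs : s.PosSemidef)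
    (K : Matrix n n 𝕜) :
    ‖(K * (s * s)).trace‖ ^ 2 ≤
      RCLike.re (s * s).trace * RCLike.re (s * Kᴴ * s * K).trace := by
  set q := hs.sqrt
  have hq : qᴴ = q := hs.posSemidef_sqrt.1
  have hqq : q * q = s := hs.sqrt_mul_self
  have h := norm_trace_mul_conjTranspose_sq_le s (q * K * q)ᴴ
  rw [conjTranspose_conjTranspose, hs.1.eq, conjTranspose_mul, conjTranspose_mul, hq] at h
  have trace_cross : (s * (q * K * q)).trace = (K * (s * s)).trace := by
    rw [← hqq]
    calc (q * q * (q * K * q)).trace = ((q * q * q * K) * q).trace := by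
          simp only [Matrix.mul_assoc]
      _ = (K * (q * q * (q * q))).trace := by
          rw [trace_mul_comm, ← Matrix.mul_assoc, trace_mul_comm]
          simp only [Matrix.mul_assoc]
  have trace_sq : (q * (Kᴴ * q) * (q * K * q)).trace = (s * Kᴴ * s * K).trace := by
    rw [← hqq]
    calc (q * (Kᴴ * q) * (q * K * q)).trace = ((q * Kᴴ * q * q * K) * q).trace := by
          simp only [Matrix.mul_assoc]
      _ = (q * q * Kᴴ * (q * q) * K).trace := by
          rw [trace_mul_comm]
          simp only [Matrix.mul_assoc]
  rwa [trace_cross, trace_sq] at h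

end RCLike

end Matrix

theorem half_frobenius_commutator_le_opVar {d : ℕ} {ρ : Matrix (Fin d) (Fin d) ℂ}
    (hρ : ρ.PosSemidef) (htr : ρ.trace = 1) (K : Matrix (Fin d) (Fin d) ℂ) :
    1 / 2 * (((hρ.sqrt * K - K * hρ.sqrt)ᴴ * (hρ.sqrt * K - K * hρ.sqrt)).trace).re ≤
      opVar ρ K := by
  have hs := hρ.posSemidef_sqrt
  have hcs := hs.norm_trace_mul_sq_le K
  rw [hρ.sqrt_mul_self, htr] at hcs
  rw [trace_conjTranspose_commutator_mul_self hs.1 K, hρ.sqrt_mul_self, opVar]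
  simp only [RCLike.re_to_complex, Complex.one_re, one_mul] at hcs
  simp only [Complex.sub_re, Complex.mul_re, Complex.re_ofNat, Complex.im_ofNat, zero_mul, sub_zero]
  linarith

theorem stmt_6_general {d n : ℕ}
    (ρ : Matrix (Fin d) (Fin d) ℂ) (hρ : ρ.PosSemidef) (htr : ρ.trace = 1)
    (K : Fin n → Matrix (Fin d) (Fin d) ℂ) :
    chanSkew ρ hρ K ≤ chanVar ρ K := by
  rw [chanSkew, chanVar, Finset.mul_sum]
  exact Finset.sum_le_sum fun i _ => half_frobenius_commutator_le_opVar hρ htr (K i)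

/-- The skew information of a channel is bounded by its variance:
`I_ρ(Φ) ≤ V_ρ(Φ)`, i.e. the classical uncertainty `C_ρ(Φ) = V_ρ(Φ) − I_ρ(Φ)` is nonnegative. -/
theorem stmt_6 {d n : ℕ}
    (ρ : Matrix (Fin d) (Fin d) ℂ) (hρ : ρ.PosSemidef) (htr : ρ.trace = 1)
    (K : Fin n → Matrix (Fin d) (Fin d) ℂ) (hK : ∑ i, (K i)ᴴ * K i = 1) :
    chanSkew ρ hρ K ≤ chanVar ρ K :=
  stmt_6_general ρ hρ htr K
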